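/- Fix c ≥ 1 and n ≥ 2. Let AN_n be the free abelian-by-nilpotent group of rank n (relative to nilpotency class c), and let ÃN_n = AN_n / ⟨⟨x_1², …, x_n²⟩⟩ with generating family Y = (y_1, …, y_n). Then n ≤ pw(ÃN_n, Y) ≤ 3n. -/

import Mathlib

/-- The element of `G` represented by a word in the alphabet `X^{±1}`:
a letter `(i, true)` stands for `X i` and `(i, false)` for `(X i)⁻¹`. -/
def evalWord {G : Type*} {n : ℕ} [Group G] (X : Fin n → G) (w : List (Fin n × Bool)) : G :=
  (w.map fun l => if l.2 then X l.1 else (X l.1)⁻¹).prod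

/-- `g` is a palindrome with respect to the generating family `X` if it is represented by
some word whose sequence of letters equals its reverse. -/
def IsPalindrome {G : Type*} {n : ℕ} [Group G] (X : Fin n → G) (g : G) : Prop :=
  ∃ w : List (Fin n × Bool), w.reverse = w ∧ evalWord X w = g

/-- `g` is a product of `k` palindromes with respect to `X`. -/
def IsPalProd {G : Type*} {n : ℕ} [Group G] (X : Fin n → G) (k : ℕ) (g : G) : Prop :=
  ∃ f : Fin k → G, (∀ i, IsPalindrome X (f i)) ∧ (List.ofFn f).prod = g

/-- The palindromic length of `g` with respect to `X`, valued in `ℕ∞`. -/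
noncomputable def palLength {G : Type*} {n : ℕ} [Group G] (X : Fin n → G) (g : G) : ℕ∞ :=
  sInf {k : ℕ∞ | ∃ m : ℕ, k = (m : ℕ∞) ∧ IsPalProd X m g}

/-- The palindromic width of `G` with respect to `X`, valued in `ℕ∞`. -/
noncomputable def palWidth {G : Type*} {n : ℕ} [Group G] (X : Fin n → G) : ℕ∞ :=
  ⨆ g : G, palLength X g

/-- The free abelian-by-nilpotent group `AN_n` of rank `n` and class `c`: the quotient of
the free group `F` on `n` generators by `[N, N]`, where `N = γ_{c+1}(F)` is the `(c+1)`-st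
term of the lower central series of `F` (so `N = lowerCentralSeries F c`, since `γ_1`
corresponds to index `0`). -/
abbrev FreeAbelianByNilpotent (n c : ℕ) :=
  FreeGroup (Fin n) ⧸
    ⁅Subgroup.lowerCentralSeries (⊤ : Subgroup (FreeGroup (Fin n))) c,
      Subgroup.lowerCentralSeries (⊤ : Subgroup (FreeGroup (Fin n))) c⁆

/-- The images `x_1, …, x_n` of the free basis in `AN_n`. -/
def anGen (n c : ℕ) (i : Fin n) : FreeAbelianByNilpotent n c :=
  QuotientGroup.mk (FreeGroup.of i)

/-- `ÃN_n`: the quotient of `AN_n` by the normal closure of the squares of the generators. -/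
abbrev TildeAN (n c : ℕ) :=
  FreeAbelianByNilpotent n c ⧸ Subgroup.normalClosure (Set.range fun i : Fin n => anGen n c i ^ 2)

/-- The generating family `y_1, …, y_n` of `ÃN_n`. -/
def tanGen (n c : ℕ) (i : Fin n) : TildeAN n c := QuotientGroup.mk (anGen n c i)

/-!
Lower bound: map `y_i` to the `i`-th basis vector of `(ℤ/2)ⁿ`. The letters of a palindrome pair
off around its middle letter, so its image has Hamming weight at most `1`, while `y_1 ⋯ y_n` maps
to `(1, …, 1)`, of weight `n`.

Upper bound, for any group generated by involutions `y_i` with `γ_c` abelian: modulo `G'`, `g` is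
`y_1 ^ k_1 ⋯ y_n ^ k_n`, a product of `n` palindromes, and every element of `G'` is
`⁅y_1, h_1⁆ ⋯ ⁅y_n, h_n⁆`, where `⁅y, h⁆ = y · (h y h⁻¹)` is a product of two palindromes.
For the latter, an error term in `⁅G, A⁆`, with `A` normal and `⁅G, A⁆` centralizing `A`, can
always be absorbed: replacing `h_i` by `h_i · v_i⁻¹ a_i v_i` (`a_i ∈ A`) multiplies the product
by `∏ ⁅z_i, a_i⁆` for suitable conjugates `z_i` of the `y_i`, and `a ↦ ∏ ⁅z_i, a_i⁆` maps `Aⁿ`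
onto `⁅G, A⁆` since the `z_i` generate `G` modulo the centralizer of `A` (they generate `G`
modulo `G'`, hence modulo every `γ_j`). Applying this in `G ⧸ γ_{k+2}` with `A = γ_k` gives the
identity modulo every `γ_{k+1}`, and applying it in `G` with `A = γ_c` removes the last error.
-/

open scoped commutatorElement Pointwise

section Palindromes

variable {G : Type*} [Group G] {n : ℕ} (X : Fin n → G)

@[simp]
lemma evalWord_nil : evalWord X [] = 1 := rfl

@[simp]
lemma evalWord_cons (l : Fin n × Bool) (w : List (Fin n × Bool)) :
    evalWord X (l :: w) = (if l.2 then X l.1 else (X l.1)⁻¹) * evalWord X w := by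
  simp [evalWord]

@[simp]
lemma evalWord_append (w w' : List (Fin n × Bool)) :
    evalWord X (w ++ w') = evalWord X w * evalWord X w' := by
  simp [evalWord]

lemma exists_evalWord_eq {g : G} (hg : g ∈ Subgroup.closure (Set.range X)) :
    ∃ w, evalWord X w = g := by
  rw [← FreeGroup.range_lift_eq_closure] at hg
  obtain ⟨x, rfl⟩ := hg
  refine ⟨x.toWord, ?_⟩
  conv_rhs => rw [← FreeGroup.mk_toWord (x := x), FreeGroup.lift_mk]
  simp [evalWord, Bool.cond_eq_ite]

lemma evalWord_reverse_of_sq_eq_one (hX : ∀ i, X i ^ 2 = 1) (w : List (Fin n × Bool)) :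
    evalWord X w.reverse = (evalWord X w)⁻¹ := by
  have hinv : ∀ i, (X i)⁻¹ = X i := fun i => inv_eq_of_mul_eq_one_right (by rw [← sq, hX])
  rw [evalWord, evalWord, List.prod_inv_reverse, List.map_map, List.map_reverse]
  congr 2
  refine List.map_congr_left fun l _ => ?_
  by_cases h : l.2 <;> simp [h, hinv]

lemma isPalindrome_zpow (i : Fin n) (k : ℤ) : IsPalindrome X (X i ^ k) := by
  obtain ⟨m, rfl | rfl⟩ := Int.eq_nat_or_neg k
  · exact ⟨List.replicate m (i, true), List.reverse_replicate .., by simp [evalWord]⟩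
  · exact ⟨List.replicate m (i, false), List.reverse_replicate .., by simp [evalWord]⟩

lemma isPalindrome_conj (hX : ∀ i, X i ^ 2 = 1) {g : G}
    (hg : g ∈ Subgroup.closure (Set.range X)) (i : Fin n) : IsPalindrome X (g * X i * g⁻¹) := by
  obtain ⟨w, rfl⟩ := exists_evalWord_eq X hg
  refine ⟨w ++ (i, true) :: w.reverse, by simp, ?_⟩
  simp [evalWord_reverse_of_sq_eq_one X hX, mul_assoc]

lemma IsPalindrome.map_eq_one_or {M : Type*} [CommGroup M] (hM : ∀ a : M, a * a = 1)
    (φ : G →* M) {g : G} (hg : IsPalindrome X g) : φ g = 1 ∨ ∃ i, φ g = φ (X i) := by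
  obtain ⟨w, hw, rfl⟩ := hg
  have hletter : ∀ l : Fin n × Bool, φ (if l.2 then X l.1 else (X l.1)⁻¹) = φ (X l.1) := by
    rintro ⟨i, _ | _⟩
    · simpa using inv_eq_of_mul_eq_one_right (hM (φ (X i)))
    · rfl
  have hp := List.Palindrome.of_reverse_eq hw
  clear hw
  induction hp with
  | nil => simp
  | singleton l => exact Or.inr ⟨l.1, by simpa using hletter l⟩
  | @cons_concat l u _ ih =>
    have hsq := hM (φ (X l.1))
    have hmid : φ (evalWord X (l :: (u ++ [l]))) = φ (evalWord X u) := by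
      simp only [evalWord_cons, evalWord_append, map_mul, hletter, evalWord_nil, mul_one]
      rw [mul_comm, mul_assoc, hsq, mul_one]
    rw [hmid]
    exact ih

lemma isPalProd_zero : IsPalProd X 0 1 := ⟨Fin.elim0, fun i => i.elim0, rfl⟩

lemma IsPalindrome.isPalProd {g : G} (hg : IsPalindrome X g) : IsPalProd X 1 g :=
  ⟨fun _ => g, fun _ => hg, by simp⟩

lemma IsPalProd.mul {a b : ℕ} {g h : G} (hg : IsPalProd X a g) (hh : IsPalProd X b h) :
    IsPalProd X (a + b) (g * h) := by
  obtain ⟨f, hf, rfl⟩ := hg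
  obtain ⟨f', hf', rfl⟩ := hh
  refine ⟨Fin.append f f', fun i => ?_, by simp [List.ofFn_fin_append]⟩
  induction i using Fin.addCases <;> simp [hf, hf']

lemma IsPalProd.list_prod_ofFn {m k : ℕ} {f : Fin m → G} (hf : ∀ i, IsPalProd X k (f i)) :
    IsPalProd X (m * k) (List.ofFn f).prod := by
  induction m with
  | zero => simpa using isPalProd_zero X
  | succ m ih =>
    rw [List.ofFn_succ, List.prod_cons, Nat.succ_mul, add_comm]
    exact (hf 0).mul X (ih fun i => hf i.succ)

lemma palLength_le {m : ℕ} {g : G} (hg : IsPalProd X m g) : palLength X g ≤ m :=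
  sInf_le ⟨m, rfl, hg⟩

lemma le_palLength {m : ℕ} {g : G} (hg : ∀ k, IsPalProd X k g → m ≤ k) :
    (m : ℕ∞) ≤ palLength X g :=
  le_sInf <| by rintro _ ⟨k, rfl, hk⟩; exact_mod_cast hg k hk

end Palindromes

lemma hammingNorm_add_le {ι β : Type*} [Fintype ι] [AddGroup β] [DecidableEq β] (x y : ι → β) :
    hammingNorm (x + y) ≤ hammingNorm x + hammingNorm y := by
  have h := hammingDist_triangle (-x) 0 y
  rwa [hammingDist_eq_hammingNorm, neg_neg, hammingDist_zero_right, hammingDist_zero_left,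
    show hammingNorm (-x) = hammingNorm x by simp [hammingNorm]] at h

section LowerBound

variable {G : Type*} [Group G] {n : ℕ} {X : Fin n → G}
  (φ : G →* Multiplicative (Fin n → ZMod 2)) (hφ : ∀ i, φ (X i) = .ofAdd (Pi.single i 1))
include hφ

lemma IsPalindrome.hammingNorm_le_one {g : G} (hg : IsPalindrome X g) :
    hammingNorm (φ g).toAdd ≤ 1 := by
  have hsq : ∀ a : Multiplicative (Fin n → ZMod 2), a * a = 1 := fun a => by
    ext i; exact CharTwo.add_self_eq_zero _
  rcases hg.map_eq_one_or X hsq φ with h | ⟨i, h⟩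
  · simp [h]
  · rw [h, hφ, toAdd_ofAdd, hammingNorm, Finset.card_le_one]
    intro a ha b hb
    simp_all [Pi.single_apply]

lemma IsPalProd.hammingNorm_le {m : ℕ} {g : G} (hg : IsPalProd X m g) :
    hammingNorm (φ g).toAdd ≤ m := by
  obtain ⟨f, hf, rfl⟩ := hg
  rw [map_list_prod, List.map_ofFn, List.prod_ofFn, toAdd_prod]
  calc hammingNorm (∑ i, (φ (f i)).toAdd) ≤ ∑ i, hammingNorm (φ (f i)).toAdd :=
        Finset.le_sum_of_subadditive _ (by simp) hammingNorm_add_le _ _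
    _ ≤ ∑ _ : Fin m, 1 := Finset.sum_le_sum fun i _ => (hf i).hammingNorm_le_one φ hφ
    _ = m := by simp

theorem card_le_palWidth : (n : ℕ∞) ≤ palWidth X := by
  let g := (List.ofFn X).prod
  have hg : hammingNorm (φ g).toAdd = n := by
    rw [map_list_prod, List.map_ofFn, List.prod_ofFn, toAdd_prod]
    simp [hφ, hammingNorm]
  calc (n : ℕ∞) ≤ palLength X g := le_palLength X fun k hk => hg ▸ hk.hammingNorm_le φ hφ
    _ ≤ palWidth X := le_iSup (palLength X) g

end LowerBound

section CommutatorWidth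

variable {G : Type*} [Group G] {n : ℕ}

lemma exists_prod_zpow_inv_mul_mem_commutator {X : Fin n → G}
    (hX : Subgroup.closure (Set.range X) = ⊤) (g : G) :
    ∃ k : Fin n → ℤ, ((List.ofFn fun i => X i ^ k i).prod)⁻¹ * g ∈ commutator G := by
  have hg : Abelianization.of g ∈ Subgroup.closure (Set.range (Abelianization.of ∘ X)) := by
    rw [Set.range_comp, ← MonoidHom.map_closure, hX]
    exact Subgroup.mem_map_of_mem _ trivial
  obtain ⟨k, hk⟩ := Subgroup.exists_of_mem_closure_range _ _ hg
  refine ⟨k, ?_⟩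
  rw [← Abelianization.ker_of, MonoidHom.mem_ker, map_mul, map_inv, map_list_prod, List.map_ofFn,
    List.prod_ofFn, hk]
  simp

lemma commutatorElement_mul_left_eq_mul_conj (a b c : G) :
    ⁅a * b, c⁆ = ⁅a, b * c * b⁻¹⁆ * ⁅b, c⁆ := by
  simp only [commutatorElement_def]; group

lemma commutator_le_sup_of_sup_eq_top {K N M : Subgroup G} [N.Normal] (hKN : K ⊔ N = ⊤)
    (hNM : ⁅N, ⊤⁆ ≤ M) : commutator G ≤ K ⊔ M := by
  have hconj : ∀ k ∈ K, ∀ m ∈ M, k * m * k⁻¹ ∈ K ⊔ M := fun k hk m hm =>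
    mul_mem (mul_mem (Subgroup.mem_sup_left hk) (Subgroup.mem_sup_right hm))
      (inv_mem (Subgroup.mem_sup_left hk))
  have hcomm : ∀ z ∈ N, ∀ g, ⁅z, g⁆ ∈ M := fun z hz g =>
    hNM (Subgroup.commutator_mem_commutator hz trivial)
  rw [commutator_def, Subgroup.commutator_le]
  intro a _ b _
  have hKN' : ∀ x : G, x ∈ (K : Set G) * (N : Set G) := fun x => by
    rw [← Subgroup.mul_normal, hKN]; trivial
  obtain ⟨k, hk, z, hz, rfl⟩ := hKN' a
  obtain ⟨k', hk', z', hz', rfl⟩ := hKN' b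
  rw [commutatorElement_mul_left_eq_conj_mul, commutatorElement_mul_right_eq_mul_conj k,
    ← commutatorElement_inv z']
  refine mul_mem (hconj k hk _ (hcomm z hz _)) (mul_mem ?_ (inv_mem (Subgroup.mem_sup_left hk')))
  refine mul_mem (mul_mem (Subgroup.mem_sup_left ?_) (Subgroup.mem_sup_left hk'))
    (Subgroup.mem_sup_right (inv_mem (hcomm z' hz' k)))
  exact K.commutator_le_self (Subgroup.commutator_mem_commutator hk hk')

lemma sup_lowerCentralSeries_eq_top {K : Subgroup G} (hK : K ⊔ commutator G = ⊤) (k : ℕ) :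
    K ⊔ (⊤ : Subgroup G).lowerCentralSeries k = ⊤ := by
  induction k with
  | zero => exact sup_top_eq K
  | succ k ih =>
    exact top_unique (hK.ge.trans (sup_le le_sup_left (commutator_le_sup_of_sup_eq_top ih le_rfl)))

lemma closure_range_conj_sup_commutator_eq_top {y : Fin n → G}
    (hy : Subgroup.closure (Set.range y) = ⊤) (v : Fin n → G) :
    Subgroup.closure (Set.range fun i => v i * y i * (v i)⁻¹) ⊔ commutator G = ⊤ := by
  rw [eq_top_iff, ← hy, Subgroup.closure_le]
  rintro _ ⟨i, rfl⟩
  have hyi : y i = v i * y i * (v i)⁻¹ * ⁅v i, (y i)⁻¹⁆ := by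
    simp only [commutatorElement_def]; group
  rw [hyi]
  exact mul_mem (Subgroup.mem_sup_left (Subgroup.subset_closure ⟨i, rfl⟩))
    (Subgroup.mem_sup_right (Subgroup.commutator_mem_commutator trivial trivial))

lemma exists_prod_commutatorElement_mul_conj {m : ℕ} (y g : Fin m → G) :
    ∃ v : Fin m → G, ∀ a : Fin m → G,
      (List.ofFn fun i => ⁅y i, g i * ((v i)⁻¹ * a i * v i)⁆).prod =
        (List.ofFn fun i => ⁅y i, g i⁆).prod *
          (List.ofFn fun i => ⁅v i * y i * (v i)⁻¹, a i⁆).prod := by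
  induction m with
  | zero => exact ⟨Fin.elim0, fun _ => by simp⟩
  | succ m ih =>
    obtain ⟨v, hv⟩ := ih (fun i => y i.succ) (fun i => g i.succ)
    refine ⟨Fin.cons (((List.ofFn fun i => ⁅y i.succ, g i.succ⁆).prod)⁻¹ * g 0) v, fun a => ?_⟩
    simp only [List.ofFn_succ, List.prod_cons, Fin.cons_zero, Fin.cons_succ, hv]
    simp only [commutatorElement_def]
    group

lemma List.prod_ofFn_eq_of_forall_ne {M : Type*} [Monoid M] {m : ℕ} (f : Fin m → M) (i : Fin m)
    (hf : ∀ j ≠ i, f j = 1) : (List.ofFn f).prod = f i := by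
  induction m with
  | zero => exact i.elim0
  | succ m ih =>
    rw [List.ofFn_succ, List.prod_cons]
    cases i using Fin.cases with
    | zero =>
      rw [List.prod_eq_one (by simpa using fun j => hf _ (Fin.succ_ne_zero j)), mul_one]
    | succ i =>
      rw [hf 0 (Fin.succ_ne_zero i).symm, one_mul, ih _ i fun j hj => hf _ (by simpa using hj)]

lemma commutatorElement_mul_left_of_mem_centralizer {A : Subgroup G} {q b a : G}
    (hb : b ∈ Subgroup.centralizer A) (ha : a ∈ A) : ⁅q * b, a⁆ = ⁅q, a⁆ := by
  have hab : a * b = b * a := Subgroup.mem_centralizer_iff.mp hb a ha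
  rw [commutatorElement_mul_left_eq_mul_conj, ← hab, mul_inv_cancel_right,
    commutatorElement_eq_one_iff_mul_comm.mpr hab.symm, mul_one]

section AbelianNormal

variable {A : Subgroup G} (hA : ⁅(⊤ : Subgroup G), A⁆ ≤ Subgroup.centralizer A)
include hA

lemma commute_of_mem_commutator_top {x y : G} (hx : x ∈ ⁅(⊤ : Subgroup G), A⁆)
    (hy : y ∈ A) : y * x = x * y :=
  Subgroup.mem_centralizer_iff.mp (hA hx) y hy

lemma commutatorElement_mul_right_of_le_centralizer (z : G) {a b : G} (ha : a ∈ A)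
    (hb : b ∈ A) : ⁅z, a * b⁆ = ⁅z, a⁆ * ⁅z, b⁆ := by
  rw [commutatorElement_mul_right_eq_mul_conj, mul_assoc _ a, commute_of_mem_commutator_top hA
    (Subgroup.commutator_mem_commutator trivial hb) ha]
  group

lemma prod_commutatorElement_mul [A.Normal] {m : ℕ} (z a b : Fin m → G) (ha : ∀ i, a i ∈ A)
    (hb : ∀ i, b i ∈ A) :
    (List.ofFn fun i => ⁅z i, a i * b i⁆).prod =
      (List.ofFn fun i => ⁅z i, a i⁆).prod * (List.ofFn fun i => ⁅z i, b i⁆).prod := by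
  induction m with
  | zero => simp
  | succ m ih =>
    have hprod : (List.ofFn fun i => ⁅z i.succ, a i.succ⁆).prod ∈ ⁅(⊤ : Subgroup G), A⁆ :=
      list_prod_mem <| by
        simpa using fun i => Subgroup.commutator_mem_commutator (Subgroup.mem_top _) (ha _)
    have hcomm := commute_of_mem_commutator_top hA hprod <| Subgroup.commutator_le_right _ _ <|
      Subgroup.commutator_mem_commutator (Subgroup.mem_top (z 0)) (hb 0)
    simp only [List.ofFn_succ, List.prod_cons, ih _ _ _ (fun i => ha _) (fun i => hb _),
      commutatorElement_mul_right_of_le_centralizer hA _ (ha 0) (hb 0), mul_assoc]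
    rw [← mul_assoc ⁅z 0, b 0⁆, hcomm, mul_assoc]

/-- A homomorphism because `⁅G, A⁆` is abelian and centralizes `A`. -/
def commutatorProdHom [A.Normal] {m : ℕ} (z : Fin m → G) : (Fin m → A) →* G where
  toFun a := (List.ofFn fun i => ⁅z i, (a i : G)⁆).prod
  map_one' := by simp
  map_mul' a b := prod_commutatorElement_mul hA z _ _ (fun i => (a i).2) (fun i => (b i).2)

theorem commutator_top_le_range_commutatorProdHom [A.Normal] {m : ℕ} (z : Fin m → G)
    (hz : Subgroup.closure (Set.range z) ⊔ Subgroup.centralizer A = ⊤) :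
    ⁅(⊤ : Subgroup G), A⁆ ≤ (commutatorProdHom hA z).range := by
  have hgen : ∀ i, ∀ a ∈ A, ⁅z i, a⁆ ∈ (commutatorProdHom hA z).range := fun i a ha =>
    ⟨Pi.mulSingle i ⟨a, ha⟩, (List.prod_ofFn_eq_of_forall_ne _ i fun j hj => by
      simp [Pi.mulSingle_eq_of_ne hj]).trans (by simp)⟩
  have hclosure : ∀ q ∈ Subgroup.closure (Set.range z), ∀ a ∈ A,
      ⁅q, a⁆ ∈ (commutatorProdHom hA z).range := by
    intro q hq
    induction hq using Subgroup.closure_induction with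
    | mem _ hq => obtain ⟨i, rfl⟩ := hq; exact hgen i
    | one => simp
    | mul q r _ _ hq hr =>
      intro a ha
      rw [commutatorElement_mul_left_eq_mul_conj]
      exact mul_mem (hq _ (‹A.Normal›.conj_mem a ha r)) (hr a ha)
    | inv q _ hq =>
      intro a ha
      have : ⁅q⁻¹, a⁆ = ⁅q, q⁻¹ * a * q⁻¹⁻¹⁆⁻¹ := by simp only [commutatorElement_def]; group
      rw [this]
      exact inv_mem (hq _ (‹A.Normal›.conj_mem a ha q⁻¹))
  rw [Subgroup.commutator_le]
  intro w _ a ha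
  obtain ⟨q, hq, b, hb, rfl⟩ : w ∈ (Subgroup.closure (Set.range z) : Set G) *
      (Subgroup.centralizer (A : Set G) : Set G) := by
    rw [← Subgroup.mul_normal, hz]; trivial
  rw [commutatorElement_mul_left_of_mem_centralizer hb ha]
  exact hclosure q hq a ha

theorem exists_prod_commutatorElement_eq_prod_mul [A.Normal] {y : Fin n → G}
    (hy : Subgroup.closure (Set.range y) = ⊤) {j : ℕ}
    (hj : (⊤ : Subgroup G).lowerCentralSeries j ≤ Subgroup.centralizer A) (g : Fin n → G) {e : G}
    (he : e ∈ ⁅(⊤ : Subgroup G), A⁆) :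
    ∃ h : Fin n → G, (List.ofFn fun i => ⁅y i, g i⁆).prod * e =
      (List.ofFn fun i => ⁅y i, h i⁆).prod := by
  obtain ⟨v, hv⟩ := exists_prod_commutatorElement_mul_conj y g
  have hz : Subgroup.closure (Set.range fun i => v i * y i * (v i)⁻¹) ⊔
      Subgroup.centralizer A = ⊤ :=
    top_unique <| (sup_lowerCentralSeries_eq_top
      (closure_range_conj_sup_commutator_eq_top hy v) j).ge.trans (sup_le_sup_left hj _)
  obtain ⟨a, rfl⟩ := commutator_top_le_range_commutatorProdHom hA _ hz he
  exact ⟨fun i => g i * ((v i)⁻¹ * a i * v i), (hv _).symm⟩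

end AbelianNormal

lemma exists_prod_commutatorElement_inv_mul_mem_ker {Q : Type*} [Group Q] {f : G →* Q}
    (hf : Function.Surjective f) (y : Fin n → G) {d : G} {h : Fin n → Q}
    (hd : f d = (List.ofFn fun i => ⁅f (y i), h i⁆).prod) :
    ∃ g : Fin n → G, ((List.ofFn fun i => ⁅y i, g i⁆).prod)⁻¹ * d ∈ f.ker := by
  refine ⟨fun i => Function.surjInv hf (h i), ?_⟩
  simp [map_list_prod, List.map_ofFn, Function.comp_def, Function.surjInv_eq, hd]

theorem exists_prod_commutatorElement_inv_mul_mem_lowerCentralSeries {y : Fin n → G}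
    (hy : Subgroup.closure (Set.range y) = ⊤) (k : ℕ) {d : G} (hd : d ∈ commutator G) :
    ∃ g : Fin n → G, ((List.ofFn fun i => ⁅y i, g i⁆).prod)⁻¹ * d ∈
      (⊤ : Subgroup G).lowerCentralSeries (k + 1) := by
  induction k generalizing G with
  | zero =>
    exact ⟨1, by simpa [Subgroup.top_lowerCentralSeries_one, -Subgroup.lowerCentralSeries_succ]⟩
  | succ k ih =>
    let N := (⊤ : Subgroup G).lowerCentralSeries (k + 2)
    let π := QuotientGroup.mk' N
    have hπ : Function.Surjective π := QuotientGroup.mk'_surjective N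
    have hlcs : ∀ i, (⊤ : Subgroup (G ⧸ N)).lowerCentralSeries i =
        ((⊤ : Subgroup G).lowerCentralSeries i).map π := fun i => by
      rw [Subgroup.map_lowerCentralSeries, Subgroup.map_top_of_surjective π hπ]
    have hy' : Subgroup.closure (Set.range (π ∘ y)) = ⊤ := by
      rw [Set.range_comp, ← MonoidHom.map_closure, hy, Subgroup.map_top_of_surjective π hπ]
    have hd' : π d ∈ commutator (G ⧸ N) := by
      rw [← Subgroup.top_lowerCentralSeries_one, hlcs]; exact Subgroup.mem_map_of_mem π hd
    have hbot : (⊤ : Subgroup (G ⧸ N)).lowerCentralSeries (k + 2) = ⊥ := by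
      rw [hlcs, Subgroup.map_eq_bot_iff, QuotientGroup.ker_mk']
    have hA : ⁅(⊤ : Subgroup (G ⧸ N)), (⊤ : Subgroup (G ⧸ N)).lowerCentralSeries k⁆ ≤
        Subgroup.centralizer ((⊤ : Subgroup (G ⧸ N)).lowerCentralSeries k) := by
      rw [Subgroup.commutator_comm]
      exact (Subgroup.commutator_top_right_eq_bot_iff_le_center.mp hbot).trans
        (Subgroup.center_le_centralizer _)
    obtain ⟨g, hg⟩ := ih hy' hd'
    rw [Subgroup.lowerCentralSeries_succ, Subgroup.commutator_comm] at hg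
    obtain ⟨h, hh⟩ := exists_prod_commutatorElement_eq_prod_mul hA hy' (hbot.trans_le bot_le) g hg
    rw [mul_inv_cancel_left] at hh
    obtain ⟨g', hg'⟩ := exists_prod_commutatorElement_inv_mul_mem_ker hπ y hh
    exact ⟨g', by rwa [QuotientGroup.ker_mk'] at hg'⟩

theorem exists_eq_prod_commutatorElement {y : Fin n → G} (hy : Subgroup.closure (Set.range y) = ⊤)
    {c : ℕ}
    (hc : ⁅(⊤ : Subgroup G).lowerCentralSeries c, (⊤ : Subgroup G).lowerCentralSeries c⁆ = ⊥)
    {d : G} (hd : d ∈ commutator G) :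
    ∃ h : Fin n → G, d = (List.ofFn fun i => ⁅y i, h i⁆).prod := by
  have hcent := Subgroup.commutator_eq_bot_iff_le_centralizer.mp hc
  obtain ⟨g, hg⟩ := exists_prod_commutatorElement_inv_mul_mem_lowerCentralSeries hy c hd
  rw [Subgroup.lowerCentralSeries_succ, Subgroup.commutator_comm] at hg
  obtain ⟨h, hh⟩ := exists_prod_commutatorElement_eq_prod_mul
    ((Subgroup.commutator_le_right _ _).trans hcent) hy hcent g hg
  exact ⟨h, by rwa [mul_inv_cancel_left] at hh⟩

end CommutatorWidth

section UpperBound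

variable {G : Type*} [Group G] {n : ℕ} {X : Fin n → G}

lemma isPalProd_two_commutatorElement (hX : ∀ i, X i ^ 2 = 1)
    (hgen : Subgroup.closure (Set.range X) = ⊤) (i : Fin n) (h : G) : IsPalProd X 2 ⁅X i, h⁆ := by
  have hinv : (X i)⁻¹ = X i := inv_eq_of_mul_eq_one_right (by rw [← sq, hX])
  have hcomm : ⁅X i, h⁆ = X i * (h * X i * h⁻¹) := by
    rw [commutatorElement_def, hinv]; group
  have hXi : IsPalindrome X (X i) := by simpa using isPalindrome_zpow X i 1
  rw [hcomm]
  exact hXi.isPalProd.mul X (isPalindrome_conj X hX (hgen ▸ Subgroup.mem_top h) i).isPalProd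

theorem palWidth_le_three_mul (hX : ∀ i, X i ^ 2 = 1) (hgen : Subgroup.closure (Set.range X) = ⊤)
    {c : ℕ}
    (hc : ⁅(⊤ : Subgroup G).lowerCentralSeries c, (⊤ : Subgroup G).lowerCentralSeries c⁆ = ⊥) :
    palWidth X ≤ ((3 * n : ℕ) : ℕ∞) := by
  refine iSup_le fun g => palLength_le X ?_
  obtain ⟨k, hk⟩ := exists_prod_zpow_inv_mul_mem_commutator hgen g
  obtain ⟨h, hh⟩ := exists_eq_prod_commutatorElement hgen hc hk
  have hg : g = (List.ofFn fun i => X i ^ k i).prod * (List.ofFn fun i => ⁅X i, h i⁆).prod := by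
    rw [← hh, mul_inv_cancel_left]
  have hpow := IsPalProd.list_prod_ofFn X fun i => (isPalindrome_zpow X i (k i)).isPalProd
  have hcomm := IsPalProd.list_prod_ofFn X fun i => isPalProd_two_commutatorElement hX hgen i (h i)
  rw [hg, show 3 * n = n * 1 + n * 2 by ring]
  exact hpow.mul X hcomm

end UpperBound

section TildeAN

variable (n c : ℕ)

def tildeANProj : FreeGroup (Fin n) →* TildeAN n c :=
  (QuotientGroup.mk' _).comp (QuotientGroup.mk' _)

lemma tildeANProj_surjective : Function.Surjective (tildeANProj n c) :=
  (QuotientGroup.mk'_surjective _).comp (QuotientGroup.mk'_surjective _)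

lemma tildeANProj_comp_of : tildeANProj n c ∘ FreeGroup.of = tanGen n c := rfl

lemma tanGen_sq (i : Fin n) : tanGen n c i ^ 2 = 1 :=
  (QuotientGroup.eq_one_iff _).mpr (Subgroup.subset_normalClosure ⟨i, rfl⟩)

lemma closure_range_tanGen : Subgroup.closure (Set.range (tanGen n c)) = ⊤ := by
  rw [← tildeANProj_comp_of, Set.range_comp, ← MonoidHom.map_closure, FreeGroup.closure_range_of,
    Subgroup.map_top_of_surjective _ (tildeANProj_surjective n c)]

lemma commutator_lowerCentralSeries_tildeAN :
    ⁅(⊤ : Subgroup (TildeAN n c)).lowerCentralSeries c,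
      (⊤ : Subgroup (TildeAN n c)).lowerCentralSeries c⁆ = ⊥ := by
  rw [← Subgroup.map_top_of_surjective _ (tildeANProj_surjective n c),
    ← Subgroup.map_lowerCentralSeries, ← Subgroup.map_commutator, Subgroup.map_eq_bot_iff]
  intro x hx
  have hx1 : QuotientGroup.mk' _ x = (1 : FreeAbelianByNilpotent n c) :=
    (QuotientGroup.eq_one_iff x).mpr hx
  rw [MonoidHom.mem_ker, tildeANProj, MonoidHom.comp_apply, hx1, map_one]

def tildeANParity : TildeAN n c →* Multiplicative (Fin n → ZMod 2) :=
  QuotientGroup.lift _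
    (QuotientGroup.lift _ (FreeGroup.lift fun i => .ofAdd (Pi.single i 1))
      ((Subgroup.commutator_mono le_top le_top).trans
        ((commutator_def _).ge.trans (Abelianization.commutator_subset_ker _))))
    (Subgroup.normalClosure_le_normal <| by
      rintro _ ⟨i, rfl⟩
      rw [SetLike.mem_coe, MonoidHom.mem_ker, map_pow, sq]
      ext j
      exact CharTwo.add_self_eq_zero _)

lemma tildeANParity_tanGen (i : Fin n) :
    tildeANParity n c (tanGen n c i) = .ofAdd (Pi.single i 1) := by
  rw [tildeANParity, tanGen, QuotientGroup.lift_mk, anGen, QuotientGroup.lift_mk,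
    FreeGroup.lift_apply_of]

end TildeAN

theorem pw_tildeAN_bounds_general (n c : ℕ) :
    (n : ℕ∞) ≤ palWidth (tanGen n c) ∧ palWidth (tanGen n c) ≤ ((3 * n : ℕ) : ℕ∞) :=
  ⟨card_le_palWidth (tildeANParity n c) (tildeANParity_tanGen n c),
    palWidth_le_three_mul (tanGen_sq n c) (closure_range_tanGen n c)
      (commutator_lowerCentralSeries_tildeAN n c)⟩

/-- For `c ≥ 1` and `n ≥ 2`, `n ≤ pw(ÃN_n, Y) ≤ 3n`. -/
theorem pw_tildeAN_bounds (n c : ℕ) (hn : 2 ≤ n) (hc : 1 ≤ c) :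
    (n : ℕ∞) ≤ palWidth (tanGen n c) ∧ palWidth (tanGen n c) ≤ ((3 * n : ℕ) : ℕ∞) :=
  pw_tildeAN_bounds_general n c
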